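/- arXiv:2407.12785 — 2 statements merged into one kernel-verified Lean document; each statement's English description precedes it below -/
import Mathlib

section
/- Let v : [N, N+1] → (0,∞) be measurable with ∫_N^{N+1} (v(x) - log v(x) - 1) dx ≤ e₀ for some e₀ > 0. Then α₁ ≤ ∫_N^{N+1} v(x) dx ≤ α₂, where 0 < α₁ < α₂ are the two roots of y - log y - 1 = e₀. -/
/-!
Since `log` is concave, Jensen's inequality on the unit interval (a probability space) gives
`I - log I - 1 ≤ ∫ (v - log v - 1) ≤ e₀` for `I = ∫ v`. The function `y ↦ y - log y - 1`
decreases on `(0, 1]` and increases on `[1, ∞)`, so its sublevel set `{· ≤ e₀}` is `[α₁, α₂]`.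
-/

open Real MeasureTheory intervalIntegral

section Jensen

variable {α : Type*} [MeasurableSpace α] {μ : Measure α} {f : α → ℝ}

lemma integral_pos_of_ae_pos [NeZero μ] (hf : ∀ᵐ x ∂μ, 0 < f x) (hfi : Integrable f μ) :
    0 < ∫ x, f x ∂μ := by
  rw [integral_pos_iff_support_of_nonneg_ae (hf.mono fun _ hx => hx.le) hfi]
  calc 0 < μ Set.univ := Measure.measure_univ_pos.mpr (NeZero.ne μ)
    _ ≤ μ (Function.support f) := measure_mono_ae (hf.mono fun _ hx _ => hx.ne')

variable [IsProbabilityMeasure μ]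

lemma integral_log_le_log_integral (hf : ∀ᵐ x ∂μ, 0 < f x) (hfi : Integrable f μ)
    (hlog : Integrable (fun x => log (f x)) μ) :
    ∫ x, log (f x) ∂μ ≤ log (∫ x, f x ∂μ) := by
  set I := ∫ x, f x ∂μ
  have hI : 0 < I := integral_pos_of_ae_pos hf hfi
  -- integrate the tangent line of `log` at `I`: `log y ≤ log I + y / I - 1`
  have htangent : ∀ᵐ x ∂μ, log (f x) ≤ log I + (f x / I - 1) := hf.mono fun x hx => by
    have := log_le_sub_one_of_pos (div_pos hx hI)
    rw [log_div hx.ne' hI.ne'] at this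
    linarith
  have hlin : Integrable (fun x => f x / I - 1) μ := (hfi.div_const I).sub (integrable_const 1)
  calc ∫ x, log (f x) ∂μ ≤ ∫ x, log I + (f x / I - 1) ∂μ :=
        integral_mono_ae hlog ((integrable_const _).add hlin) htangent
    _ = log I := by
        rw [integral_add (integrable_const _) hlin, integral_sub (hfi.div_const I)
          (integrable_const 1), MeasureTheory.integral_div, div_self hI.ne']
        simp

lemma sub_log_integral_sub_one_le (hf : ∀ᵐ x ∂μ, 0 < f x) (hfi : Integrable f μ)
    (hgi : Integrable (fun x => f x - log (f x) - 1) μ) :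
    (∫ x, f x ∂μ) - log (∫ x, f x ∂μ) - 1 ≤ ∫ x, (f x - log (f x) - 1) ∂μ := by
  have hlog : Integrable (fun x => log (f x)) μ := by
    convert (hfi.sub hgi).sub (integrable_const (1 : ℝ)) using 1
    funext x
    simp only [Pi.sub_apply]
    ring
  rw [integral_sub (f := fun x => f x - log (f x)) (hfi.sub hlog) (integrable_const 1),
    integral_sub hfi hlog]
  simp only [MeasureTheory.integral_const, probReal_univ, one_smul]
  linarith [integral_log_le_log_integral hf hfi hlog]

end Jensen

-- Both monotonicity statements come from the strict inequality `log t < t - 1` at `t = y / a`.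
lemma le_of_sub_log_sub_one_le_of_le_one {a y : ℝ} (ha : 0 < a) (ha1 : a ≤ 1) (hy : 0 < y)
    (h : y - log y - 1 ≤ a - log a - 1) : a ≤ y := by
  by_contra! hya
  have hlt := log_lt_sub_one_of_pos (div_pos hy ha) (div_lt_one ha |>.mpr hya).ne
  rw [log_div hy.ne' ha.ne'] at hlt
  have : a - y ≤ (a - y) / a := le_div_self (by linarith) ha ha1
  rw [sub_div, div_self ha.ne'] at this
  linarith

lemma le_of_sub_log_sub_one_le_of_one_le {a y : ℝ} (ha1 : 1 ≤ a) (hy : 0 < y)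
    (h : y - log y - 1 ≤ a - log a - 1) : y ≤ a := by
  by_contra! hay
  have ha : 0 < a := by linarith
  have hlt := log_lt_sub_one_of_pos (div_pos hy ha) (one_lt_div ha |>.mpr hay).ne'
  rw [log_div hy.ne' ha.ne'] at hlt
  have : (y - a) / a ≤ y - a := div_le_self (by linarith) ha1
  rw [sub_div, div_self ha.ne'] at this
  linarith

theorem stmt3_general (N e₀ α₁ α₂ : ℝ) (v : ℝ → ℝ)
    (hα₁ : 0 < α₁)
    (hroot₁ : α₁ - Real.log α₁ - 1 = e₀) (hroot₂ : α₂ - Real.log α₂ - 1 = e₀)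
    (hα₁1 : α₁ < 1) (hα₂1 : 1 < α₂)
    (hvpos : ∀ x ∈ Set.Icc N (N + 1), 0 < v x)
    (hint : IntervalIntegrable v volume N (N + 1))
    (hint' : IntervalIntegrable (fun x => v x - Real.log (v x) - 1) volume N (N + 1))
    (hE : ∫ x in N..(N + 1), (v x - Real.log (v x) - 1) ≤ e₀) :
    α₁ ≤ ∫ x in N..(N + 1), v x ∧ (∫ x in N..(N + 1), v x) ≤ α₂ := by
  have hN : N ≤ N + 1 := by linarith
  have : IsProbabilityMeasure (volume.restrict (Set.Ioc N (N + 1))) :=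
    ⟨by simp [Real.volume_Ioc]⟩
  rw [integral_of_le hN] at hE ⊢
  rw [intervalIntegrable_iff_integrableOn_Ioc_of_le hN] at hint hint'
  have hpos : ∀ᵐ x ∂volume.restrict (Set.Ioc N (N + 1)), 0 < v x :=
    ae_restrict_of_forall_mem measurableSet_Ioc fun x hx => hvpos x (Set.Ioc_subset_Icc_self hx)
  have hI := integral_pos_of_ae_pos hpos hint
  have hJensen := (sub_log_integral_sub_one_le hpos hint hint').trans hE
  exact ⟨le_of_sub_log_sub_one_le_of_le_one hα₁ hα₁1.le hI (hroot₁ ▸ hJensen),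
    le_of_sub_log_sub_one_le_of_one_le hα₂1.le hI (hroot₂ ▸ hJensen)⟩

/-- If `∫_N^{N+1} (v - log v - 1) ≤ e₀` for a positive function `v`, then
`α₁ ≤ ∫_N^{N+1} v ≤ α₂` where `α₁ < α₂` are the two roots of `y - log y - 1 = e₀`. -/
theorem stmt3 (N e₀ α₁ α₂ : ℝ) (v : ℝ → ℝ)
    (he₀ : 0 < e₀) (hα₁ : 0 < α₁) (hα : α₁ < α₂)
    (hroot₁ : α₁ - Real.log α₁ - 1 = e₀) (hroot₂ : α₂ - Real.log α₂ - 1 = e₀)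
    (hα₁1 : α₁ < 1) (hα₂1 : 1 < α₂)
    (hv : Measurable v) (hvpos : ∀ x ∈ Set.Icc N (N + 1), 0 < v x)
    (hint : IntervalIntegrable v volume N (N + 1))
    (hint' : IntervalIntegrable (fun x => v x - Real.log (v x) - 1) volume N (N + 1))
    (hE : ∫ x in N..(N + 1), (v x - Real.log (v x) - 1) ≤ e₀) :
    α₁ ≤ ∫ x in N..(N + 1), v x ∧ (∫ x in N..(N + 1), v x) ≤ α₂ :=
  stmt3_general N e₀ α₁ α₂ v hα₁ hroot₁ hroot₂ hα₁1 hα₂1 hvpos hint hint' hE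
end

section
/- Let θ : [N, N+1] → (0,∞) be C¹ and v : [N, N+1] → (0,∞) measurable, and let β ≥ 0. Then for all x ∈ [N, N+1]: |θ(x)^{(β+1)/2} − (∫_N^{N+1} θ dy)^{(β+1)/2}| ≤ ((β+1)/2) · (∫_N^{N+1} θ^β θ_x² / (θ² v) dy)^{1/2} · (∫_N^{N+1} θ v dy)^{1/2}. -/
open Real MeasureTheory intervalIntegral

/-! Pick `c` with `θ c = ∫_N^{N+1} θ` (the interval has length one). Then `θ x ^ p - θ c ^ p`,
`p = (β + 1) / 2`, is bounded by `∫ |(θ ^ p)'|`, and `|(θ ^ p)'| = p θ^{(β-1)/2} |θ_x|` splits as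
`p √(θ^β θ_x² / (θ² v)) · √(θ v)`, so Cauchy–Schwarz gives the bound. -/

lemma exists_mem_Icc_eq_integral_of_continuousOn {f : ℝ → ℝ} (N : ℝ)
    (hf : ContinuousOn f (Set.Icc N (N + 1))) :
    ∃ c ∈ Set.Icc N (N + 1), f c = ∫ y in N..(N + 1), f y := by
  have hN : N ≤ N + 1 := by linarith
  obtain ⟨c, hc, hfc⟩ := exists_eq_interval_average (by linarith : N ≠ N + 1)
    (by rwa [Set.uIcc_of_le hN])
  refine ⟨c, Set.uIcc_of_le hN ▸ Set.uIoo_subset_uIcc_self hc, ?_⟩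
  rw [hfc, interval_average_eq]
  simp

lemma abs_sub_le_integral_abs_deriv {f f' : ℝ → ℝ} {s t a b : ℝ}
    (hderiv : ∀ y ∈ Set.Icc s t, HasDerivAt f (f' y) y)
    (hint : IntervalIntegrable f' volume s t)
    (ha : a ∈ Set.Icc s t) (hb : b ∈ Set.Icc s t) :
    |f b - f a| ≤ ∫ y in s..t, |f' y| := by
  wlog hab : a ≤ b generalizing a b
  · rw [abs_sub_comm]
    exact this hb ha (le_of_not_ge hab)
  have hsub : Set.uIcc a b ⊆ Set.Icc s t := by
    rw [Set.uIcc_of_le hab]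
    exact Set.Icc_subset_Icc ha.1 hb.2
  have hint_ab : IntervalIntegrable f' volume a b :=
    hint.mono_set (by rwa [Set.uIcc_of_le (ha.1.trans ha.2)])
  rw [← integral_eq_sub_of_hasDerivAt (fun y hy => hderiv y (hsub hy)) hint_ab]
  calc |∫ y in a..b, f' y| ≤ ∫ y in a..b, |f' y| := abs_integral_le_integral_abs hab
    _ ≤ ∫ y in s..t, |f' y| :=
      integral_mono_interval ha.1 hab hb.2 (ae_of_all _ fun y => abs_nonneg _) hint.abs

lemma memLp_two_sqrt_of_integrable {α : Type*} [MeasurableSpace α] {μ : Measure α} {f : α → ℝ}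
    (hf_nonneg : 0 ≤ᵐ[μ] f) (hf : Integrable f μ) : MemLp (fun x => √(f x)) 2 μ := by
  rw [memLp_two_iff_integrable_sq
    (continuous_sqrt.comp_aestronglyMeasurable hf.aestronglyMeasurable)]
  refine hf.congr ?_
  filter_upwards [hf_nonneg] with x hx
  exact (sq_sqrt hx).symm

lemma integral_sqrt_mul_sqrt_le {α : Type*} [MeasurableSpace α] {μ : Measure α} {f g : α → ℝ}
    (hf_nonneg : 0 ≤ᵐ[μ] f) (hg_nonneg : 0 ≤ᵐ[μ] g) (hf : Integrable f μ) (hg : Integrable g μ) :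
    ∫ x, √(f x) * √(g x) ∂μ ≤ (∫ x, f x ∂μ) ^ ((1 : ℝ) / 2) * (∫ x, g x ∂μ) ^ ((1 : ℝ) / 2) := by
  have hsq : ∀ {h : α → ℝ}, 0 ≤ᵐ[μ] h → ∫ x, √(h x) ^ (2 : ℝ) ∂μ = ∫ x, h x ∂μ := fun hh =>
    integral_congr_ae <| by
      filter_upwards [hh] with x hx
      rw [rpow_two, sq_sqrt hx]
  have hCS := integral_mul_le_Lp_mul_Lq_of_nonneg Real.HolderConjugate.two_two
    (ae_of_all _ fun x => sqrt_nonneg (f x)) (ae_of_all _ fun x => sqrt_nonneg (g x))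
    (by simpa using memLp_two_sqrt_of_integrable hf_nonneg hf) (by simpa using memLp_two_sqrt_of_integrable hg_nonneg hg)
  rwa [hsq hf_nonneg, hsq hg_nonneg] at hCS

lemma intervalIntegral_sqrt_mul_sqrt_le {f g : ℝ → ℝ} {s t : ℝ} (hst : s ≤ t)
    (hf_nonneg : ∀ y ∈ Set.Icc s t, 0 ≤ f y) (hg_nonneg : ∀ y ∈ Set.Icc s t, 0 ≤ g y)
    (hf : IntervalIntegrable f volume s t) (hg : IntervalIntegrable g volume s t) :
    ∫ y in s..t, √(f y) * √(g y) ≤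
      (∫ y in s..t, f y) ^ ((1 : ℝ) / 2) * (∫ y in s..t, g y) ^ ((1 : ℝ) / 2) := by
  have hae : ∀ {h : ℝ → ℝ}, (∀ y ∈ Set.Icc s t, 0 ≤ h y) →
      0 ≤ᵐ[volume.restrict (Set.Ioc s t)] h := fun hh =>
    ae_restrict_of_forall_mem measurableSet_Ioc fun y hy => hh y (Set.Ioc_subset_Icc_self hy)
  simp only [integral_of_le hst]
  exact integral_sqrt_mul_sqrt_le (hae hf_nonneg) (hae hg_nonneg) hf.1 hg.1

lemma abs_mul_rpow_eq_sqrt_mul_sqrt {β t w d : ℝ} (hβ : -1 ≤ β) (ht : 0 < t) (hw : 0 < w) :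
    |d * ((β + 1) / 2) * t ^ ((β + 1) / 2 - 1)| =
      (β + 1) / 2 * (√(t ^ β * d ^ 2 / (t ^ 2 * w)) * √(t * w)) := by
  have hprod : t ^ β * d ^ 2 / (t ^ 2 * w) * (t * w) = (|d| * t ^ ((β + 1) / 2 - 1)) ^ 2 := by
    rw [mul_pow, sq_abs, ← rpow_mul_natCast ht.le, Nat.cast_ofNat,
      show ((β + 1) / 2 - 1) * 2 = β - 1 by ring, rpow_sub_one ht.ne']
    field_simp
  rw [← sqrt_mul (by positivity), hprod, sqrt_sq (by positivity), abs_mul, abs_mul,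
    abs_of_nonneg (by linarith : 0 ≤ (β + 1) / 2), abs_of_pos (rpow_pos_of_pos ht _)]
  ring

theorem stmt6_general (N β : ℝ) (θ v : ℝ → ℝ)
    (hβ : 0 ≤ β) (hθ : ContDiff ℝ 1 θ)
    (hθpos : ∀ x ∈ Set.Icc N (N + 1), 0 < θ x)
    (hvpos : ∀ x ∈ Set.Icc N (N + 1), 0 < v x)
    (h1 : IntervalIntegrable
      (fun y => θ y ^ β * (deriv θ y) ^ 2 / (θ y ^ 2 * v y)) volume N (N + 1))
    (h2 : IntervalIntegrable (fun y => θ y * v y) volume N (N + 1)) :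
    ∀ x ∈ Set.Icc N (N + 1),
      |θ x ^ ((β + 1) / 2) - (∫ y in N..(N + 1), θ y) ^ ((β + 1) / 2)| ≤
        ((β + 1) / 2) *
          (∫ y in N..(N + 1), θ y ^ β * (deriv θ y) ^ 2 / (θ y ^ 2 * v y)) ^ ((1 : ℝ) / 2) *
          (∫ y in N..(N + 1), θ y * v y) ^ ((1 : ℝ) / 2) := by
  intro x hx
  set p := (β + 1) / 2
  have hN : N ≤ N + 1 := by linarith
  have hI : Set.uIcc N (N + 1) = Set.Icc N (N + 1) := Set.uIcc_of_le hN
  obtain ⟨c, hc, hθc⟩ := exists_mem_Icc_eq_integral_of_continuousOn N hθ.continuous.continuousOn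
  have hderiv : ∀ y ∈ Set.Icc N (N + 1),
      HasDerivAt (fun t => θ t ^ p) (deriv θ y * p * θ y ^ (p - 1)) y := fun y hy =>
    ((hθ.differentiable one_ne_zero y).hasDerivAt).rpow_const (Or.inl (hθpos y hy).ne')
  have hint : IntervalIntegrable (fun y => deriv θ y * p * θ y ^ (p - 1)) volume N (N + 1) :=
    ContinuousOn.intervalIntegrable <| by
      rw [hI]
      exact ((hθ.continuous_deriv le_rfl).continuousOn.mul continuousOn_const).mul
        (hθ.continuous.continuousOn.rpow_const fun y hy => Or.inl (hθpos y hy).ne')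
  rw [← hθc]
  calc |θ x ^ p - θ c ^ p| ≤ ∫ y in N..(N + 1), |deriv θ y * p * θ y ^ (p - 1)| :=
        abs_sub_le_integral_abs_deriv hderiv hint hc hx
    _ = ∫ y in N..(N + 1), p * (√(θ y ^ β * deriv θ y ^ 2 / (θ y ^ 2 * v y)) * √(θ y * v y)) :=
        integral_congr fun y hy => abs_mul_rpow_eq_sqrt_mul_sqrt (by linarith)
          (hθpos y (hI ▸ hy)) (hvpos y (hI ▸ hy))
    _ = p * ∫ y in N..(N + 1), √(θ y ^ β * deriv θ y ^ 2 / (θ y ^ 2 * v y)) * √(θ y * v y) :=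
        integral_const_mul _ _
    _ ≤ _ := by
        rw [mul_assoc]
        refine mul_le_mul_of_nonneg_left (intervalIntegral_sqrt_mul_sqrt_le hN (fun y hy => ?_)
          (fun y hy => ?_) h1 h2) (by positivity)
        · have := hθpos y hy; have := hvpos y hy; positivity
        · exact mul_nonneg (hθpos y hy).le (hvpos y hy).le

/-- Pointwise control of `θ^{(β+1)/2}` by its mean over `[N, N+1]` plus the
weighted Dirichlet integral, via the mean value theorem and Cauchy–Schwarz. -/
theorem stmt6 (N β : ℝ) (θ v : ℝ → ℝ)
    (hβ : 0 ≤ β) (hθ : ContDiff ℝ 1 θ)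
    (hθpos : ∀ x ∈ Set.Icc N (N + 1), 0 < θ x)
    (hv : Measurable v) (hvpos : ∀ x ∈ Set.Icc N (N + 1), 0 < v x)
    (h1 : IntervalIntegrable
      (fun y => θ y ^ β * (deriv θ y) ^ 2 / (θ y ^ 2 * v y)) volume N (N + 1))
    (h2 : IntervalIntegrable (fun y => θ y * v y) volume N (N + 1)) :
    ∀ x ∈ Set.Icc N (N + 1),
      |θ x ^ ((β + 1) / 2) - (∫ y in N..(N + 1), θ y) ^ ((β + 1) / 2)| ≤
        ((β + 1) / 2) *
          (∫ y in N..(N + 1), θ y ^ β * (deriv θ y) ^ 2 / (θ y ^ 2 * v y)) ^ ((1 : ℝ) / 2) *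
          (∫ y in N..(N + 1), θ y * v y) ^ ((1 : ℝ) / 2) :=
  stmt6_general N β θ v hβ hθ hθpos hvpos h1 h2
end
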